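/- arXiv:2506.11929 — 4 statements merged into one kernel-verified Lean document; each statement's English description precedes it below -/
import Mathlib

section
/- Let v* be the unique minimizer of φ(v) = max_{i=1,...,m} (g_i^T v + (1/2)||v||^2). Then v* = 0 if and only if for every direction d ∈ R^n there exists an index j ∈ {1,...,m} with g_j^T d ≥ 0. -/
/-!
At `v = 0` the model `φ` vanishes. If some `g j` makes a nonnegative inner product with a
minimiser `v`, then `½‖v‖² ≤ φ v ≤ φ 0 = 0`, so `v = 0`. Conversely, if `d` is a common descent
direction, the quadratic term is of second order along the ray `t • d`, so `φ (t • d) < 0 = φ 0`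
for small `t > 0` and `0` is not a minimiser.
-/

open scoped RealInnerProductSpace

lemma exists_pos_mul_add_half_sq_mul_neg {a b : ℝ} (ha : a < 0) (hb : 0 ≤ b) :
    ∃ t : ℝ, 0 < t ∧ t * a + 1 / 2 * t ^ 2 * b < 0 := by
  refine ⟨-a / (b + 1), div_pos (neg_pos.mpr ha) (by linarith), ?_⟩
  have hb1 : 0 < b + 1 := by linarith
  field_simp
  nlinarith

namespace MultiObjective

variable {E ι : Type*} [NormedAddCommGroup E] [InnerProductSpace ℝ E]

noncomputable def descentModel (s : Finset ι) (hs : s.Nonempty) (g : ι → E) (v : E) : ℝ :=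
  s.sup' hs fun i => ⟪g i, v⟫ + 1 / 2 * ‖v‖ ^ 2

variable {s : Finset ι} {hs : s.Nonempty} {g : ι → E}

@[simp]
lemma descentModel_zero : descentModel s hs g 0 = 0 := by
  simp [descentModel]

lemma half_sq_norm_le_descentModel {v : E} {j : ι} (hj : j ∈ s) (hgj : 0 ≤ ⟪g j, v⟫) :
    1 / 2 * ‖v‖ ^ 2 ≤ descentModel s hs g v :=
  calc 1 / 2 * ‖v‖ ^ 2 ≤ ⟪g j, v⟫ + 1 / 2 * ‖v‖ ^ 2 := by linarith
    _ ≤ descentModel s hs g v := Finset.le_sup' (fun i => ⟪g i, v⟫ + 1 / 2 * ‖v‖ ^ 2) hj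

lemma exists_descentModel_neg {d : E} (hd : ∀ i ∈ s, ⟪g i, d⟫ < 0) :
    ∃ v, descentModel s hs g v < 0 := by
  set M := s.sup' hs fun i => ⟪g i, d⟫
  have hM : M < 0 := (Finset.sup'_lt_iff hs).mpr hd
  obtain ⟨t, ht, htM⟩ := exists_pos_mul_add_half_sq_mul_neg hM (sq_nonneg ‖d‖)
  refine ⟨t • d, (Finset.sup'_lt_iff hs).mpr fun i hi => ?_⟩
  have hiM : ⟪g i, d⟫ ≤ M := Finset.le_sup' (fun i => ⟪g i, d⟫) hi
  calc ⟪g i, t • d⟫ + 1 / 2 * ‖t • d‖ ^ 2 = t * ⟪g i, d⟫ + 1 / 2 * t ^ 2 * ‖d‖ ^ 2 := by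
        rw [real_inner_smul_right, norm_smul, mul_pow, Real.norm_eq_abs, sq_abs]; ring
    _ ≤ t * M + 1 / 2 * t ^ 2 * ‖d‖ ^ 2 := by gcongr
    _ < 0 := htM

lemma exists_inner_nonneg_of_isMinOn_zero (hmin : IsMinOn (descentModel s hs g) Set.univ 0)
    (d : E) : ∃ j ∈ s, 0 ≤ ⟪g j, d⟫ := by
  by_contra! hd
  obtain ⟨v, hv⟩ := exists_descentModel_neg (hs := hs) hd
  have := isMinOn_univ_iff.mp hmin v
  rw [descentModel_zero] at this
  linarith

lemma eq_zero_of_isMinOn {v : E} (hmin : IsMinOn (descentModel s hs g) Set.univ v)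
    {j : ι} (hj : j ∈ s) (hgj : 0 ≤ ⟪g j, v⟫) : v = 0 := by
  have hle := isMinOn_univ_iff.mp hmin 0
  rw [descentModel_zero] at hle
  have hv := half_sq_norm_le_descentModel (hs := hs) hj hgj
  have hv2 : ‖v‖ ^ 2 = 0 := by linarith [sq_nonneg ‖v‖]
  exact norm_eq_zero.mp (pow_eq_zero_iff two_ne_zero |>.mp hv2)

end MultiObjective

open MultiObjective in
theorem stmt_2 {n m : ℕ} (hm : 0 < m) (g : Fin m → EuclideanSpace ℝ (Fin n))
    (φ : EuclideanSpace ℝ (Fin n) → ℝ)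
    (hφ : ∀ v, φ v = Finset.univ.sup' ⟨⟨0, hm⟩, Finset.mem_univ _⟩
      (fun i => ⟪g i, v⟫ + (1 / 2) * ‖v‖ ^ 2))
    (vstar : EuclideanSpace ℝ (Fin n)) (hmin : IsMinOn φ Set.univ vstar) :
    vstar = 0 ↔ ∀ d : EuclideanSpace ℝ (Fin n), ∃ j : Fin m, 0 ≤ ⟪g j, d⟫ := by
  have hφ' : φ = descentModel Finset.univ ⟨⟨0, hm⟩, Finset.mem_univ _⟩ g := funext hφ
  subst hφ'
  constructor
  · rintro rfl d
    obtain ⟨j, -, hj⟩ := exists_inner_nonneg_of_isMinOn_zero hmin d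
    exact ⟨j, hj⟩
  · intro h
    obtain ⟨j, hj⟩ := h vstar
    exact eq_zero_of_isMinOn hmin (Finset.mem_univ j) hj
end

section
/- If 0 is a global minimizer of s ↦ m^p(x,s) (with positive regularization parameters), then x is Pareto-stationary, i.e., for every d ∈ R^n there exists i with ∇f_i(x)^T d ≥ 0. -/
/-!
Along a ray `s = t • d`, each regularized Taylor model equals `t * ψ t` with `ψ` continuous and
`ψ 0 = ∇f_i(x)ᵀ d`, since the terms of order `j ≥ 2` and the regularization are `O(t²)`. If every
`∇f_i(x)ᵀ d` were negative, then for small `t > 0` all models, hence their maximum, would be negative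
at `t • d`, while the maximum vanishes at `0`.
-/

open scoped RealInnerProductSpace Topology
open Filter Finset

section RegularizedTaylorModel

variable {E : Type*} [NormedAddCommGroup E] [NormedSpace ℝ E]

theorem ContinuousMultilinearMap.apply_const_smul {k : ℕ}
    (A : ContinuousMultilinearMap ℝ (fun _ : Fin k => E) ℝ) (t : ℝ) (d : E) :
    A (fun _ => t • d) = t ^ k * A (fun _ => d) := by
  simpa [prod_const, smul_eq_mul] using A.map_smul_univ (fun _ => t) (fun _ => d)

/-- The paper's `m^p(x, ·)` is the maximum over `i` of these models with `A j = ∇^j f_i(x)` and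
`c = σ_i / p!`. -/
noncomputable def regTaylorModel (p : ℕ)
    (A : (j : ℕ) → ContinuousMultilinearMap ℝ (fun _ : Fin j => E) ℝ) (c : ℝ) (s : E) : ℝ :=
  (∑ j ∈ Icc 1 p, (1 / (j.factorial : ℝ)) * A j (fun _ => s)) + c * ‖s‖ ^ (p + 1)

variable {p : ℕ} {A : (j : ℕ) → ContinuousMultilinearMap ℝ (fun _ : Fin j => E) ℝ} {c : ℝ}

theorem regTaylorModel_zero : regTaylorModel p A c 0 = 0 := by
  have hterm : ∀ j ∈ Icc 1 p, (1 / (j.factorial : ℝ)) * A j (fun _ => (0 : E)) = 0 := by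
    intro j hj
    rw [(A j).map_coord_zero ⟨0, (mem_Icc.mp hj).1⟩ rfl, mul_zero]
  rw [regTaylorModel, sum_eq_zero hterm]
  simp

theorem regTaylorModel_smul {t : ℝ} (ht : 0 ≤ t) (d : E) :
    regTaylorModel p A c (t • d) =
      t * ((∑ j ∈ Icc 1 p, t ^ (j - 1) * ((1 / (j.factorial : ℝ)) * A j (fun _ => d)))
        + c * ‖d‖ ^ (p + 1) * t ^ p) := by
  have hterm : ∀ j ∈ Icc 1 p, (1 / (j.factorial : ℝ)) * A j (fun _ => t • d) =
      t * (t ^ (j - 1) * ((1 / (j.factorial : ℝ)) * A j (fun _ => d))) := by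
    intro j hj
    obtain ⟨k, rfl⟩ := Nat.exists_eq_add_of_le' (mem_Icc.mp hj).1
    rw [(A _).apply_const_smul, Nat.add_sub_cancel, pow_succ]
    ring
  rw [regTaylorModel, sum_congr rfl hterm, ← mul_sum, norm_smul, Real.norm_of_nonneg ht]
  ring

theorem eventually_regTaylorModel_smul_neg (hp : 1 ≤ p) {d : E} (hd : A 1 (fun _ => d) < 0) :
    ∀ᶠ t in 𝓝[>] (0 : ℝ), regTaylorModel p A c (t • d) < 0 := by
  set ψ : ℝ → ℝ := fun t =>
    (∑ j ∈ Icc 1 p, t ^ (j - 1) * ((1 / (j.factorial : ℝ)) * A j (fun _ => d)))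
      + c * ‖d‖ ^ (p + 1) * t ^ p
  have hψ_cont : Continuous ψ := by fun_prop
  have hψ_zero : ψ 0 = A 1 (fun _ => d) := by
    have hsum : ∑ j ∈ Icc 1 p, (0 : ℝ) ^ (j - 1) * ((1 / (j.factorial : ℝ)) * A j (fun _ => d))
        = A 1 (fun _ => d) := by
      rw [sum_eq_single_of_mem 1 (mem_Icc.mpr ⟨le_rfl, hp⟩)]
      · simp
      · intro j hj hj1
        rw [zero_pow (by grind), zero_mul]
    simp only [ψ, hsum, zero_pow (by omega : p ≠ 0), mul_zero, add_zero]
  have hψ_neg : ∀ᶠ t in 𝓝[>] 0, ψ t < 0 :=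
    nhdsWithin_le_nhds ((hψ_cont.tendsto 0).eventually_lt_const (hψ_zero ▸ hd))
  filter_upwards [hψ_neg, self_mem_nhdsWithin] with t hψt (ht : 0 < t)
  rw [regTaylorModel_smul ht.le]
  exact mul_neg_of_pos_of_neg ht hψt

theorem exists_nonneg_of_isMinOn_sup'_regTaylorModel {ι : Type*} [Fintype ι]
    (hι : (univ : Finset ι).Nonempty) (hp : 1 ≤ p)
    (A : ι → (j : ℕ) → ContinuousMultilinearMap ℝ (fun _ : Fin j => E) ℝ) (c : ι → ℝ)
    (hmin : IsMinOn (fun s => univ.sup' hι fun i => regTaylorModel p (A i) (c i) s) Set.univ 0)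
    (d : E) : ∃ i, 0 ≤ A i 1 (fun _ => d) := by
  by_contra! hneg
  have hall : ∀ᶠ t in 𝓝[>] (0 : ℝ), ∀ i, regTaylorModel p (A i) (c i) (t • d) < 0 :=
    eventually_all.mpr fun i => eventually_regTaylorModel_smul_neg hp (hneg i)
  obtain ⟨t, ht⟩ := hall.exists
  have hle := isMinOn_iff.mp hmin (t • d) (Set.mem_univ _)
  simp only [regTaylorModel_zero, sup'_const] at hle
  exact hle.not_gt ((sup'_lt_iff hι).mpr fun i _ => ht i)

end RegularizedTaylorModel

theorem stmt_10_general {n m p : ℕ} (hm : 0 < m) (hp : 1 ≤ p)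
    (f : Fin m → EuclideanSpace ℝ (Fin n) → ℝ)
    (x : EuclideanSpace ℝ (Fin n)) (σ : Fin m → ℝ)
    (M : EuclideanSpace ℝ (Fin n) → ℝ)
    (hM : ∀ s, M s = Finset.univ.sup' ⟨⟨0, hm⟩, Finset.mem_univ _⟩ (fun i =>
      (∑ j ∈ Finset.Icc 1 p, (1 / (j.factorial : ℝ)) * iteratedFDeriv ℝ j (f i) x (fun _ => s))
        + (σ i / (p.factorial : ℝ)) * ‖s‖ ^ (p + 1)))
    (hmin : IsMinOn M Set.univ 0) :
    ∀ d : EuclideanSpace ℝ (Fin n), ∃ i : Fin m, 0 ≤ ⟪gradient (f i) x, d⟫ := by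
  intro d
  obtain rfl : M = fun s => univ.sup' _ fun i =>
      regTaylorModel p (fun j => iteratedFDeriv ℝ j (f i) x) (σ i / p.factorial) s :=
    funext hM
  obtain ⟨i, hi⟩ := exists_nonneg_of_isMinOn_sup'_regTaylorModel _ hp _ _ hmin d
  refine ⟨i, ?_⟩
  rwa [gradient, InnerProductSpace.toDual_symm_apply, ← iteratedFDeriv_one_apply (fun _ => d)]

theorem stmt_10 {n m p : ℕ} (hm : 0 < m) (hp : 1 ≤ p)
    (f : Fin m → EuclideanSpace ℝ (Fin n) → ℝ)
    (hf : ∀ i, ContDiff ℝ p (f i))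
    (L : Fin m → ℝ)
    (hLip : ∀ i, ∀ x y : EuclideanSpace ℝ (Fin n),
      ‖iteratedFDeriv ℝ p (f i) x - iteratedFDeriv ℝ p (f i) y‖ ≤ L i * ‖x - y‖)
    (x : EuclideanSpace ℝ (Fin n)) (σ : Fin m → ℝ) (hσ : ∀ i, 0 < σ i)
    (M : EuclideanSpace ℝ (Fin n) → ℝ)
    (hM : ∀ s, M s = Finset.univ.sup' ⟨⟨0, hm⟩, Finset.mem_univ _⟩ (fun i =>
      (∑ j ∈ Finset.Icc 1 p, (1 / (j.factorial : ℝ)) * iteratedFDeriv ℝ j (f i) x (fun _ => s))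
        + (σ i / (p.factorial : ℝ)) * ‖s‖ ^ (p + 1)))
    (hmin : IsMinOn M Set.univ 0) :
    ∀ d : EuclideanSpace ℝ (Fin n), ∃ i : Fin m, 0 ≤ ⟪gradient (f i) x, d⟫ :=
  stmt_10_general hm hp f x σ M hM hmin
end

section
/- Let x ∈ R^n, η ∈ (0,1), and suppose each ∇^p f_i is Lipschitz with constant L_i and σ_i ≥ L_i/(1−η) for each i. If s̄ is a global minimizer of m^p(x,·) with regularization vector σ, then f_i(x+s̄) ≤ f_i(x) − η(σ_i/p!)||s̄||^{p+1} for every i = 1,...,m. -/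
/-!
Along the segment `t ↦ x + t • s̄`, Taylor's theorem with Lagrange remainder and the Lipschitz
continuity of `∇ᵖ fᵢ` bound the error of the `p`-th order Taylor model by `(Lᵢ / p!) ‖s̄‖ᵖ⁺¹`.
Every component of the regularized model vanishes at `s = 0`, so its maximum is at most `0` at a
minimizer `s̄`; hence `Tᵢ(x, s̄) - fᵢ(x) ≤ -(σᵢ / p!) ‖s̄‖ᵖ⁺¹`, and `Lᵢ ≤ (1 - η) σᵢ` leaves the
decrease `η (σᵢ / p!) ‖s̄‖ᵖ⁺¹`.
-/

open Finset Set

lemma IsMinOn.apply_le_of_sup'_le {ι α β : Type*} [SemilatticeSup β] {s : Finset ι}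
    (hs : s.Nonempty) {g : ι → α → β} {a b : α} {c : β}
    (hmin : IsMinOn (fun y => s.sup' hs (g · y)) univ a) (hb : ∀ k ∈ s, g k b ≤ c)
    {i : ι} (hi : i ∈ s) : g i a ≤ c :=
  calc g i a ≤ s.sup' hs (g · a) := le_sup' (g · a) hi
    _ ≤ s.sup' hs (g · b) := hmin (mem_univ b)
    _ ≤ c := sup'_le hs _ hb

section Taylor

variable {E : Type*} [NormedAddCommGroup E] [NormedSpace ℝ E]

/-- `T^p(x, s) - f(x)`: the Taylor polynomial of `f` at `x` without its constant term. -/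
noncomputable def taylorIncrement (f : E → ℝ) (p : ℕ) (x s : E) : ℝ :=
  ∑ j ∈ Icc 1 p, (1 / (j.factorial : ℝ)) * iteratedFDeriv ℝ j f x (fun _ => s)

lemma taylorIncrement_zero_right (f : E → ℝ) (p : ℕ) (x : E) : taylorIncrement f p x 0 = 0 := by
  refine sum_eq_zero fun j hj => ?_
  rw [(iteratedFDeriv ℝ j f x).map_coord_zero ⟨0, (mem_Icc.1 hj).1⟩ rfl, mul_zero]

lemma taylorIncrement_succ (f : E → ℝ) (q : ℕ) (x s : E) :
    taylorIncrement f (q + 1) x s = taylorIncrement f q x s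
      + iteratedFDeriv ℝ (q + 1) f x (fun _ => s) / ((q + 1).factorial : ℝ) := by
  rw [taylorIncrement, sum_Icc_succ_top (by omega), one_div_mul_eq_div]
  rfl

variable {f : E → ℝ} {p : ℕ}

lemma iteratedDeriv_comp_add_smul (hf : ContDiff ℝ p f) (x v : E) {j : ℕ} (hj : j ≤ p)
    (t : ℝ) : iteratedDeriv j (fun t : ℝ => f (x + t • v)) t
      = iteratedFDeriv ℝ j f (x + t • v) (fun _ => v) := by
  have hshift : ContDiff ℝ p (fun y => f (x + y)) := hf.comp (contDiff_const.add contDiff_id)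
  have key := (ContinuousLinearMap.toSpanSingleton ℝ v).iteratedFDeriv_comp_right hshift t
    (i := j) (by exact_mod_cast hj)
  rw [iteratedDeriv_eq_iteratedFDeriv]
  change iteratedFDeriv ℝ j ((fun y => f (x + y)) ∘ ContinuousLinearMap.toSpanSingleton ℝ v) t
    (fun _ => 1) = _
  simp [key, iteratedFDeriv_comp_add_left]

lemma taylorWithinEval_comp_add_smul (hf : ContDiff ℝ p f) (x v : E) {q : ℕ} (hq : q ≤ p) :
    taylorWithinEval (fun t : ℝ => f (x + t • v)) q (Icc 0 1) 0 1
      = f x + taylorIncrement f q x v := by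
  have hline : ContDiff ℝ p (fun t : ℝ => f (x + t • v)) :=
    hf.comp (contDiff_const.add (contDiff_id.smul contDiff_const))
  induction q with
  | zero => simp [taylorIncrement]
  | succ q ih =>
    rw [taylorWithinEval_succ, ih (by omega), taylorIncrement_succ,
      iteratedDerivWithin_eq_iteratedDeriv (uniqueDiffOn_Icc zero_lt_one)
        (hline.contDiffAt.of_le (by exact_mod_cast hq)) (left_mem_Icc.2 zero_le_one),
      iteratedDeriv_comp_add_smul hf x v hq, Nat.factorial_succ]
    simp [div_eq_inv_mul, add_assoc]

lemma exists_taylor_lagrange_add {q : ℕ} (hf : ContDiff ℝ (q + 1) f) (x v : E) :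
    ∃ t ∈ Ioo (0 : ℝ) 1, f (x + v) = f x + taylorIncrement f q x v
      + iteratedFDeriv ℝ (q + 1) f (x + t • v) (fun _ => v) / ((q + 1).factorial : ℝ) := by
  have hline : ContDiff ℝ (q + 1) (fun t : ℝ => f (x + t • v)) :=
    hf.comp (contDiff_const.add (contDiff_id.smul contDiff_const))
  obtain ⟨t, ht, hT⟩ := taylor_mean_remainder_lagrange_iteratedDeriv (x₀ := 0) (x := 1)
    zero_ne_one hline.contDiffOn
  rw [uIoo_of_le zero_le_one] at ht
  rw [Set.uIcc_of_le zero_le_one, taylorWithinEval_comp_add_smul hf x v q.le_succ,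
    iteratedDeriv_comp_add_smul hf x v le_rfl] at hT
  refine ⟨t, ht, ?_⟩
  simp only [one_smul, sub_zero, one_pow, mul_one] at hT
  linarith

lemma abs_sub_taylorIncrement_le (hp : 1 ≤ p) (hf : ContDiff ℝ p f) {L : ℝ}
    (hLip : ∀ y z, ‖iteratedFDeriv ℝ p f y - iteratedFDeriv ℝ p f z‖ ≤ L * ‖y - z‖) (x v : E) :
    |f (x + v) - f x - taylorIncrement f p x v| ≤ L / (p.factorial : ℝ) * ‖v‖ ^ (p + 1) := by
  obtain ⟨q, rfl⟩ : ∃ q, p = q + 1 := ⟨p - 1, by omega⟩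
  obtain ⟨t, ⟨ht0, ht1⟩, hT⟩ := exists_taylor_lagrange_add hf x v
  set Δ := iteratedFDeriv ℝ (q + 1) f (x + t • v) - iteratedFDeriv ℝ (q + 1) f x
  have hremainder : f (x + v) - f x - taylorIncrement f (q + 1) x v
      = Δ (fun _ => v) / ((q + 1).factorial : ℝ) := by
    rw [hT, taylorIncrement_succ, sub_apply]
    ring
  have hΔ : ‖Δ‖ ≤ L * (t * ‖v‖) := by
    simpa [norm_smul, abs_of_pos ht0] using hLip (x + t • v) x
  -- `L` may be negative (when `E` is trivial), but `L ‖v‖ ≥ 0` is all the estimate needs.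
  have hLv : 0 ≤ L * ‖v‖ := by simpa using (norm_nonneg _).trans (hLip (x + v) x)
  have hΔv : |Δ (fun _ => v)| ≤ L * ‖v‖ ^ (q + 2) :=
    calc |Δ (fun _ => v)| ≤ ‖Δ‖ * ∏ _ : Fin (q + 1), ‖v‖ := Δ.le_opNorm _
      _ ≤ t * (L * ‖v‖) * ‖v‖ ^ (q + 1) := by
          rw [prod_const, card_univ, Fintype.card_fin]
          gcongr
          linarith
      _ ≤ 1 * (L * ‖v‖) * ‖v‖ ^ (q + 1) := by gcongr
      _ = L * ‖v‖ ^ (q + 2) := by ring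
  rw [hremainder, abs_div, Nat.abs_cast, div_mul_eq_mul_div]
  gcongr

end Taylor

theorem stmt_11_general {n m p : ℕ} (hm : 0 < m) (hp : 1 ≤ p)
    (f : Fin m → EuclideanSpace ℝ (Fin n) → ℝ)
    (hf : ∀ i, ContDiff ℝ p (f i))
    (L : Fin m → ℝ)
    (hLip : ∀ i, ∀ x y : EuclideanSpace ℝ (Fin n),
      ‖iteratedFDeriv ℝ p (f i) x - iteratedFDeriv ℝ p (f i) y‖ ≤ L i * ‖x - y‖)
    (η : ℝ) (hη1 : η < 1)
    (x : EuclideanSpace ℝ (Fin n)) (σ : Fin m → ℝ)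
    (hσL : ∀ i, L i / (1 - η) ≤ σ i)
    (M : EuclideanSpace ℝ (Fin n) → ℝ)
    (hM : ∀ s, M s = Finset.univ.sup' ⟨⟨0, hm⟩, Finset.mem_univ _⟩ (fun i =>
      (∑ j ∈ Finset.Icc 1 p, (1 / (j.factorial : ℝ)) * iteratedFDeriv ℝ j (f i) x (fun _ => s))
        + (σ i / (p.factorial : ℝ)) * ‖s‖ ^ (p + 1)))
    (sbar : EuclideanSpace ℝ (Fin n)) (hmin : IsMinOn M Set.univ sbar) :
    ∀ i, f i (x + sbar) ≤ f i x - η * (σ i / (p.factorial : ℝ)) * ‖sbar‖ ^ (p + 1) := by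
  intro i
  have hmodel : taylorIncrement (f i) p x sbar + σ i / (p.factorial : ℝ) * ‖sbar‖ ^ (p + 1) ≤ 0 :=
    IsMinOn.apply_le_of_sup'_le (g := fun k s => taylorIncrement (f k) p x s
        + σ k / (p.factorial : ℝ) * ‖s‖ ^ (p + 1)) _ (funext hM ▸ hmin) (b := 0)
      (fun k _ => by simp [taylorIncrement_zero_right]) (mem_univ i)
  have htaylor := (abs_le.1 (abs_sub_taylorIncrement_le hp (hf i) (hLip i) x sbar)).2
  have hLσ : L i / (p.factorial : ℝ) * ‖sbar‖ ^ (p + 1)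
      ≤ (1 - η) * (σ i / (p.factorial : ℝ)) * ‖sbar‖ ^ (p + 1) := by
    have : L i ≤ (1 - η) * σ i := (div_le_iff₀' (by linarith)).1 (hσL i)
    rw [← mul_div_assoc]
    gcongr
  linarith

theorem stmt_11 {n m p : ℕ} (hm : 0 < m) (hp : 1 ≤ p)
    (f : Fin m → EuclideanSpace ℝ (Fin n) → ℝ)
    (hf : ∀ i, ContDiff ℝ p (f i))
    (L : Fin m → ℝ)
    (hLip : ∀ i, ∀ x y : EuclideanSpace ℝ (Fin n),
      ‖iteratedFDeriv ℝ p (f i) x - iteratedFDeriv ℝ p (f i) y‖ ≤ L i * ‖x - y‖)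
    (η : ℝ) (hη : 0 < η) (hη1 : η < 1)
    (x : EuclideanSpace ℝ (Fin n)) (σ : Fin m → ℝ) (hσ : ∀ i, 0 < σ i)
    (hσL : ∀ i, L i / (1 - η) ≤ σ i)
    (M : EuclideanSpace ℝ (Fin n) → ℝ)
    (hM : ∀ s, M s = Finset.univ.sup' ⟨⟨0, hm⟩, Finset.mem_univ _⟩ (fun i =>
      (∑ j ∈ Finset.Icc 1 p, (1 / (j.factorial : ℝ)) * iteratedFDeriv ℝ j (f i) x (fun _ => s))
        + (σ i / (p.factorial : ℝ)) * ‖s‖ ^ (p + 1)))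
    (sbar : EuclideanSpace ℝ (Fin n)) (hmin : IsMinOn M Set.univ sbar) :
    ∀ i, f i (x + sbar) ≤ f i x - η * (σ i / (p.factorial : ℝ)) * ‖sbar‖ ^ (p + 1) :=
  stmt_11_general hm hp f hf L hLip η hη1 x σ hσL M hM sbar hmin
end

section
/- Let Y ⊂ R^n be finite, y ∈ R^n, ν > 0, and suppose for every x ∈ Y there exists an index i with f_i(y) ≤ f_i(x) − ν. Let ρ ∈ R^m satisfy ρ ≥ F(x) + ν·1 for all x ∈ Y ∪ {y}. Then HI(F(Y ∪ {y})) − HI(F(Y)) ≥ ν^m, where HI(A) = vol(∪_{a∈A} [a, ρ]) is the hypervolume indicator with reference point ρ. -/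
/-!
The cube `[F y, F y + ν)` lies in the box `[F y, ρ]` of the new point, and it misses every
box `[F x, ρ]` with `x ∈ Y`: in the coordinate `i` where `F y` beats `F x` by `ν`, points of
the cube stay strictly below `F x i`. Adding `y` therefore adds at least the cube's volume `ν ^ m`.
-/

open MeasureTheory Set

theorem disjoint_Ici_pi_Iio {ι : Type*} {α : Type*} [Preorder α] {b c : ι → α}
    (h : ∃ i, c i ≤ b i) : Disjoint (Ici b) (univ.pi fun i => Iio (c i)) := by
  obtain ⟨i, hi⟩ := h
  refine disjoint_left.2 fun z hbz hzc => ?_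
  exact (hi.trans (hbz i)).not_gt (hzc i trivial)

theorem volume_pi_Ico_add_const {ι : Type*} [Fintype ι] (a : ι → ℝ) {ν : ℝ}
    (hν : 0 ≤ ν) :
    volume (univ.pi fun i => Ico (a i) (a i + ν)) = ENNReal.ofReal (ν ^ Fintype.card ι) := by
  simp [Real.volume_pi_Ico, ENNReal.ofReal_pow hν]

theorem stmt_13 {n m : ℕ} (f : Fin m → EuclideanSpace ℝ (Fin n) → ℝ)
    (F : EuclideanSpace ℝ (Fin n) → (Fin m → ℝ)) (hF : ∀ x i, F x i = f i x)
    (Y : Finset (EuclideanSpace ℝ (Fin n))) (y : EuclideanSpace ℝ (Fin n))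
    (ν : ℝ) (hν : 0 < ν)
    (hgood : ∀ x ∈ Y, ∃ i, f i y ≤ f i x - ν)
    (ρ : Fin m → ℝ)
    (hρ : ∀ x ∈ insert y (Y : Set (EuclideanSpace ℝ (Fin n))), ∀ i, F x i + ν ≤ ρ i) :
    volume (⋃ x ∈ insert y (Y : Set (EuclideanSpace ℝ (Fin n))), Set.Icc (F x) ρ)
      ≥ volume (⋃ x ∈ (Y : Set (EuclideanSpace ℝ (Fin n))), Set.Icc (F x) ρ)
        + ENNReal.ofReal (ν ^ m) := by
  set U := ⋃ x ∈ (Y : Set (EuclideanSpace ℝ (Fin n))), Icc (F x) ρ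
  set B := univ.pi fun i => Ico (F y i) (F y i + ν)
  have hB_sub : B ⊆ Icc (F y) ρ := fun z hz =>
    ⟨fun i => (hz i trivial).1, fun i => (hz i trivial).2.le.trans (hρ y (mem_insert _ _) i)⟩
  have hUB : Disjoint U B := by
    refine disjoint_iUnion₂_left.2 fun x hx => ?_
    obtain ⟨i, hi⟩ := hgood x hx
    refine (disjoint_Ici_pi_Iio ⟨i, ?_⟩).mono Icc_subset_Ici_self
      (pi_mono fun _ _ => Ico_subset_Iio_self)
    rw [hF, hF]
    linarith
  calc volume (⋃ x ∈ insert y (Y : Set (EuclideanSpace ℝ (Fin n))), Icc (F x) ρ)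
      ≥ volume (U ∪ B) := by
        rw [biUnion_insert]
        exact measure_mono (union_subset subset_union_right (hB_sub.trans subset_union_left))
    _ = volume U + volume B := measure_union hUB (.univ_pi fun _ => measurableSet_Ico)
    _ = volume U + ENNReal.ofReal (ν ^ m) := by
        rw [volume_pi_Ico_add_const _ hν.le, Fintype.card_fin]
end
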